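/- Let a, x, b ∈ ℝ with x ≠ a. If (a−x)·b ≤ 0, then ∫₀^∞ (|a−x|/t^{3/2}) φ((a + bt − x)/√t) dt = 1, while if (a−x)·b > 0, then ∫₀^∞ (|a−x|/t^{3/2}) φ((a + bt − x)/√t) dt = e^{−2b(a−x)}. (Equivalently: the first-passage time of Brownian motion through the line a + bt is finite with probability one when (a−x)b ≤ 0, and has defective distribution with total mass e^{−2b(a−x)} when (a−x)b > 0.) -/

import Mathlib

open Real MeasureTheory Set Filter

/-- Standard Gaussian density φ(z) = (1/√(2π)) e^{−z²/2}. -/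
noncomputable def gaussPdf (z : ℝ) : ℝ := (1 / Real.sqrt (2 * π)) * Real.exp (-z ^ 2 / 2)

/-- Standard Gaussian distribution function Φ(y) = ∫_{−∞}^y φ(z) dz. -/
noncomputable def gaussCdf (y : ℝ) : ℝ := ∫ z in Set.Iio y, gaussPdf z

/-- ψ_t(u) = (e^{−b²u/2}/(π√(u(t−u)))) · [ e^{−b²(t−u)/2}
      + (b/2)·√(2π(t−u)) · (2Φ(b√(t−u)) − 1) ]. -/
noncomputable def psi (b t u : ℝ) : ℝ :=
  (Real.exp (-b ^ 2 * u / 2) / (π * Real.sqrt (u * (t - u)))) *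
    (Real.exp (-b ^ 2 * (t - u) / 2) +
      (b / 2) * Real.sqrt (2 * π * (t - u)) *
        (2 * gaussCdf (b * Real.sqrt (t - u)) - 1))

/-- Inverse Gaussian first-passage density f_{τ₁}(t) = (|a−x|/t^{3/2}) φ((a+bt−x)/√t). -/
noncomputable def invGaussPdf (a x b t : ℝ) : ℝ :=
  (|a - x| / t ^ ((3 : ℝ) / 2)) * gaussPdf ((a + b * t - x) / Real.sqrt t)

/-
Write `c = |a - x| > 0`; since `φ` is even, the case `a < x` is the case `a > x` with `-b` for `b`.
The Bachelier–Lévy function `F(t) = Φ((-c - bt)/√t) + e^{-2bc} Φ((-c + bt)/√t)` is an antiderivative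
of `c t^{-3/2} φ((c + bt)/√t)` on `(0, ∞)`: differentiating, the two Gaussian factors coincide
because `e^{-2bc} φ((-c + bt)/√t) = φ((c + bt)/√t)`. Since `F(0+) = 0`, the integral is `F(∞)`,
which is `1 + e^{-2bc}·0 = 1` for `b < 0`, `Φ(0) + Φ(0) = 1` for `b = 0` and `0 + e^{-2bc}·1`
for `b > 0`.
-/

open Topology ProbabilityTheory

section SetIntegralIio

variable {E : Type*} [NormedAddCommGroup E] [NormedSpace ℝ E] {f : ℝ → E}

theorem tendsto_setIntegral_Iio_atTop {μ : Measure ℝ} (hf : Integrable f μ) :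
    Tendsto (fun y => ∫ z in Iio y, f z ∂μ) atTop (𝓝 (∫ z, f z ∂μ)) := by
  have h := tendsto_setIntegral_of_monotone (μ := μ) (fun y => measurableSet_Iio)
    (fun _ _ hyz => Iio_subset_Iio hyz) (by rw [iUnion_Iio]; exact hf.integrableOn)
  rwa [iUnion_Iio, setIntegral_univ] at h

theorem tendsto_setIntegral_Iio_atBot {μ : Measure ℝ} (hf : Integrable f μ) :
    Tendsto (fun y => ∫ z in Iio y, f z ∂μ) atBot (𝓝 0) := by
  have h := tendsto_setIntegral_of_antitone (μ := μ) (s := fun y : ℝ => Iio (-y))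
    (fun y => measurableSet_Iio) (fun _ _ hyz => Iio_subset_Iio (neg_le_neg hyz))
    ⟨0, hf.integrableOn⟩
  have hempty : ⋂ y : ℝ, Iio (-y) = ∅ :=
    eq_empty_of_forall_notMem fun z hz => (mem_iInter.1 hz (-z)).out.ne (neg_neg z).symm
  rw [hempty, setIntegral_empty] at h
  refine (h.comp tendsto_neg_atBot_atTop).congr fun y => ?_
  simp only [Function.comp, neg_neg]

theorem hasDerivAt_setIntegral_Iio [CompleteSpace E] (hf : Integrable f) (hcont : Continuous f) (y : ℝ) :
    HasDerivAt (fun y => ∫ z in Iio y, f z) (f y) y := by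
  have hsplit : (fun y => ∫ z in Iio y, f z) = fun y => (∫ z in Iio 0, f z) + ∫ z in (0)..y, f z := by
    funext y
    rw [← integral_Iic_eq_integral_Iio, ← integral_Iic_eq_integral_Iio,
      ← intervalIntegral.integral_Iic_sub_Iic hf.integrableOn hf.integrableOn, add_sub_cancel]
  rw [hsplit]
  exact (intervalIntegral.integral_hasDerivAt_right hf.intervalIntegrable
    (hcont.stronglyMeasurableAtFilter _ _) hcont.continuousAt).const_add _

end SetIntegralIio

section Gaussian

theorem gaussPdf_eq_gaussianPDFReal : gaussPdf = gaussianPDFReal 0 1 := by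
  funext z
  simp [gaussPdf, gaussianPDFReal]

theorem gaussPdf_nonneg (z : ℝ) : 0 ≤ gaussPdf z := by
  unfold gaussPdf; positivity

theorem gaussPdf_neg (z : ℝ) : gaussPdf (-z) = gaussPdf z := by
  simp [gaussPdf]

theorem continuous_gaussPdf : Continuous gaussPdf := by
  unfold gaussPdf; fun_prop

theorem integrable_gaussPdf : Integrable gaussPdf := by
  rw [gaussPdf_eq_gaussianPDFReal]; exact integrable_gaussianPDFReal 0 1

theorem integral_gaussPdf : ∫ z, gaussPdf z = 1 := by
  rw [gaussPdf_eq_gaussianPDFReal]; exact integral_gaussianPDFReal_eq_one 0 one_ne_zero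

theorem hasDerivAt_gaussCdf (y : ℝ) : HasDerivAt gaussCdf (gaussPdf y) y :=
  hasDerivAt_setIntegral_Iio integrable_gaussPdf continuous_gaussPdf y

theorem continuous_gaussCdf : Continuous gaussCdf :=
  continuous_iff_continuousAt.2 fun y => (hasDerivAt_gaussCdf y).continuousAt

theorem tendsto_gaussCdf_atTop : Tendsto gaussCdf atTop (𝓝 1) :=
  integral_gaussPdf ▸ tendsto_setIntegral_Iio_atTop integrable_gaussPdf

theorem tendsto_gaussCdf_atBot : Tendsto gaussCdf atBot (𝓝 0) :=
  tendsto_setIntegral_Iio_atBot integrable_gaussPdf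

theorem gaussCdf_zero : gaussCdf 0 = 1 / 2 := by
  have hsymm : ∫ z in Ioi (0 : ℝ), gaussPdf z = gaussCdf 0 := by
    have h := integral_comp_neg_Ioi 0 gaussPdf
    simp only [gaussPdf_neg, neg_zero] at h
    rw [h, integral_Iic_eq_integral_Iio]
    rfl
  have htotal := intervalIntegral.integral_Iic_add_Ioi (b := 0)
    integrable_gaussPdf.integrableOn integrable_gaussPdf.integrableOn
  rw [integral_gaussPdf, integral_Iic_eq_integral_Iio, hsymm] at htotal
  change gaussCdf 0 + gaussCdf 0 = 1 at htotal
  linarith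

theorem exp_mul_gaussPdf_reflect (c b : ℝ) {t : ℝ} (ht : 0 < t) :
    exp (-2 * b * c) * gaussPdf ((-c + b * t) / √t) = gaussPdf ((c + b * t) / √t) := by
  have hsq : √t ^ 2 = t := sq_sqrt ht.le
  unfold gaussPdf
  rw [mul_left_comm, ← exp_add, div_pow, div_pow, hsq]
  congr 2
  field_simp
  ring

end Gaussian

section AffineDivSqrt

variable (p q : ℝ)

theorem rpow_three_halves {t : ℝ} (ht : 0 ≤ t) : t ^ ((3 : ℝ) / 2) = t * √t := by
  rw [show (3 : ℝ) / 2 = 1 + 1 / 2 by norm_num, rpow_add' ht (by norm_num), rpow_one,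
    sqrt_eq_rpow]

theorem hasDerivAt_affine_div_sqrt {t : ℝ} (ht : 0 < t) :
    HasDerivAt (fun t => (p + q * t) / √t) ((q * t - p) / (2 * t ^ ((3 : ℝ) / 2))) t := by
  have hs : √t ≠ 0 := (sqrt_pos.2 ht).ne'
  refine ((((hasDerivAt_id' t).const_mul q).const_add p).div (hasDerivAt_sqrt ht.ne') hs).congr_deriv ?_
  rw [rpow_three_halves ht.le, sq_sqrt ht.le]
  field_simp
  rw [sq_sqrt ht.le]
  ring

theorem tendsto_affine_div_sqrt_nhdsGT_zero {p : ℝ} (hp : p < 0) :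
    Tendsto (fun t => (p + q * t) / √t) (𝓝[>] 0) atBot := by
  have hsqrt : Tendsto (fun t : ℝ => √t) (𝓝[>] 0) (𝓝[>] 0) := by
    refine tendsto_nhdsWithin_iff.2 ⟨?_, ?_⟩
    · simpa using (continuous_sqrt.tendsto 0).mono_left nhdsWithin_le_nhds
    · filter_upwards [self_mem_nhdsWithin] with t ht using sqrt_pos.2 ht
  have hnum : Tendsto (fun t : ℝ => p + q * t) (𝓝[>] 0) (𝓝 p) := by
    refine ((by fun_prop : Continuous fun t : ℝ => p + q * t).tendsto' 0 p ?_).mono_left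
      nhdsWithin_le_nhds
    simp
  exact (hnum.neg_mul_atTop hp (tendsto_inv_nhdsGT_zero.comp hsqrt)).congr fun t =>
    (div_eq_mul_inv _ _).symm

theorem affine_div_sqrt_eq {t : ℝ} (ht : 0 < t) : (p + q * t) / √t = p / √t + q * √t := by
  have hs : √t ≠ 0 := (sqrt_pos.2 ht).ne'
  field_simp
  rw [sq_sqrt ht.le]

theorem tendsto_const_div_sqrt_atTop : Tendsto (fun t => p / √t) atTop (𝓝 0) :=
  tendsto_const_nhds.div_atTop tendsto_sqrt_atTop

theorem tendsto_affine_div_sqrt_atTop_of_pos {q : ℝ} (hq : 0 < q) :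
    Tendsto (fun t => (p + q * t) / √t) atTop atTop := by
  refine (Tendsto.add_atTop (tendsto_const_div_sqrt_atTop p)
    (tendsto_sqrt_atTop.const_mul_atTop hq)).congr' ?_
  filter_upwards [eventually_gt_atTop 0] with t ht using (affine_div_sqrt_eq p q ht).symm

theorem tendsto_affine_div_sqrt_atTop_of_neg {q : ℝ} (hq : q < 0) :
    Tendsto (fun t => (p + q * t) / √t) atTop atBot :=
  (tendsto_neg_atTop_atBot.comp (tendsto_affine_div_sqrt_atTop_of_pos (-p) (neg_pos.2 hq))).congr
    fun t => by simp only [Function.comp]; ring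

end AffineDivSqrt

/-- The branch `t ≤ 0` makes the function right-continuous at `0`: at `t = 0` the formula would
read `Φ(0) (1 + e^{-2bc})`, because `√0 = 0` and `x / 0 = 0`. -/
noncomputable def passageCdf (c b t : ℝ) : ℝ :=
  if t ≤ 0 then 0 else
    gaussCdf ((-c + -b * t) / √t) + exp (-2 * b * c) * gaussCdf ((-c + b * t) / √t)

theorem passageCdf_of_pos (c b : ℝ) {t : ℝ} (ht : 0 < t) :
    passageCdf c b t =
      gaussCdf ((-c + -b * t) / √t) + exp (-2 * b * c) * gaussCdf ((-c + b * t) / √t) :=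
  if_neg ht.not_ge

theorem passageCdf_eventuallyEq (c b : ℝ) {l : Filter ℝ} (hl : ∀ᶠ t in l, 0 < t) :
    passageCdf c b =ᶠ[l]
      fun t => gaussCdf ((-c + -b * t) / √t) + exp (-2 * b * c) * gaussCdf ((-c + b * t) / √t) :=
  hl.mono fun _ ht => passageCdf_of_pos c b ht

theorem hasDerivAt_passageCdf (c b : ℝ) {t : ℝ} (ht : 0 < t) :
    HasDerivAt (passageCdf c b) (c / t ^ ((3 : ℝ) / 2) * gaussPdf ((c + b * t) / √t)) t := by
  have hfirst := (hasDerivAt_gaussCdf _).comp t (hasDerivAt_affine_div_sqrt (-c) (-b) ht)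
  have hsecond := ((hasDerivAt_gaussCdf _).comp t
    (hasDerivAt_affine_div_sqrt (-c) b ht)).const_mul (exp (-2 * b * c))
  have hneg : (-c + -b * t) / √t = -((c + b * t) / √t) := by ring
  refine ((hfirst.add hsecond).congr_of_eventuallyEq
    (passageCdf_eventuallyEq c b (Ioi_mem_nhds ht))).congr_deriv ?_
  rw [← mul_assoc, exp_mul_gaussPdf_reflect c b ht, hneg, gaussPdf_neg]
  have h32 : 0 < t ^ ((3 : ℝ) / 2) := rpow_pos_of_pos ht _
  field_simp
  ring

theorem passageCdf_zero (c b : ℝ) : passageCdf c b 0 = 0 :=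
  if_pos le_rfl

theorem continuousWithinAt_passageCdf_zero (b : ℝ) {c : ℝ} (hc : 0 < c) :
    ContinuousWithinAt (passageCdf c b) (Ici 0) 0 := by
  rw [← continuousWithinAt_Ioi_iff_Ici, ContinuousWithinAt, passageCdf_zero]
  have hlim := (tendsto_gaussCdf_atBot.comp
    (tendsto_affine_div_sqrt_nhdsGT_zero (-b) (neg_neg_of_pos hc))).add
    ((tendsto_gaussCdf_atBot.comp
      (tendsto_affine_div_sqrt_nhdsGT_zero b (neg_neg_of_pos hc))).const_mul (exp (-2 * b * c)))
  rw [mul_zero, add_zero] at hlim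
  exact hlim.congr' (passageCdf_eventuallyEq c b self_mem_nhdsWithin).symm

theorem tendsto_passageCdf_atTop (c b : ℝ) :
    Tendsto (passageCdf c b) atTop (𝓝 (if 0 < b then exp (-2 * b * c) else 1)) := by
  refine Tendsto.congr' (passageCdf_eventuallyEq c b (eventually_gt_atTop 0)).symm ?_
  rcases lt_trichotomy b 0 with hb | rfl | hb
  · rw [if_neg hb.not_gt]
    simpa using (tendsto_gaussCdf_atTop.comp
      (tendsto_affine_div_sqrt_atTop_of_pos (-c) (neg_pos.2 hb))).add
      ((tendsto_gaussCdf_atBot.comp (tendsto_affine_div_sqrt_atTop_of_neg (-c) hb)).const_mul _)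
  · have hΦ : Tendsto (fun t => gaussCdf (-c / √t)) atTop (𝓝 (1 / 2)) :=
      gaussCdf_zero ▸ (continuous_gaussCdf.tendsto 0).comp (tendsto_const_div_sqrt_atTop (-c))
    rw [if_neg (lt_irrefl 0), show (1 : ℝ) = 1 / 2 + 1 / 2 by norm_num]
    simpa using hΦ.add hΦ
  · rw [if_pos hb]
    simpa using (tendsto_gaussCdf_atBot.comp
      (tendsto_affine_div_sqrt_atTop_of_neg (-c) (neg_neg_of_pos hb))).add
      ((tendsto_gaussCdf_atTop.comp (tendsto_affine_div_sqrt_atTop_of_pos (-c) hb)).const_mul _)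

theorem integral_deriv_passageCdf (b : ℝ) {c : ℝ} (hc : 0 < c) :
    ∫ t in Ioi 0, c / t ^ ((3 : ℝ) / 2) * gaussPdf ((c + b * t) / √t) =
      if 0 < b then exp (-2 * b * c) else 1 := by
  rw [integral_Ioi_of_hasDerivAt_of_nonneg (continuousWithinAt_passageCdf_zero b hc)
    (fun t ht => hasDerivAt_passageCdf c b ht)
    (fun t ht => mul_nonneg (div_nonneg hc.le (rpow_nonneg (le_of_lt ht) _)) (gaussPdf_nonneg _))
    (tendsto_passageCdf_atTop c b), passageCdf_zero, sub_zero]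

theorem integral_invGaussPdf {a x : ℝ} (hax : x ≠ a) (b : ℝ) :
    ∫ t in Ioi 0, invGaussPdf a x b t =
      if 0 < (a - x) * b then exp (-2 * b * (a - x)) else 1 := by
  rcases lt_or_gt_of_ne (sub_ne_zero.2 hax.symm) with hneg | hpos
  · have hrefl : ∀ t, invGaussPdf a x b t =
        (x - a) / t ^ ((3 : ℝ) / 2) * gaussPdf ((x - a + -b * t) / √t) := fun t => by
      rw [invGaussPdf, abs_of_neg hneg, neg_sub, ← gaussPdf_neg]
      ring_nf
    have hc : 0 < x - a := sub_pos.2 (sub_neg.1 hneg)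
    simp only [hrefl, integral_deriv_passageCdf (-b) hc]
    have hsign : (0 < -b) ↔ 0 < (a - x) * b := by
      rw [show (a - x) * b = (x - a) * -b by ring, mul_pos_iff_of_pos_left hc]
    simp only [hsign, show -2 * -b * (x - a) = -2 * b * (a - x) by ring]
  · have hshift : ∀ t, invGaussPdf a x b t =
        (a - x) / t ^ ((3 : ℝ) / 2) * gaussPdf ((a - x + b * t) / √t) := fun t => by
      rw [invGaussPdf, abs_of_pos hpos, sub_add_eq_add_sub]
    simp only [hshift, integral_deriv_passageCdf b hpos, mul_pos_iff_of_pos_left hpos]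

theorem stmt9 (a x b : ℝ) (hax : x ≠ a) :
    ((a - x) * b ≤ 0 →
      ∫ t in Set.Ioi (0 : ℝ),
          (|a - x| / t ^ ((3 : ℝ) / 2)) * gaussPdf ((a + b * t - x) / Real.sqrt t) = 1) ∧
    ((a - x) * b > 0 →
      ∫ t in Set.Ioi (0 : ℝ),
          (|a - x| / t ^ ((3 : ℝ) / 2)) * gaussPdf ((a + b * t - x) / Real.sqrt t)
        = Real.exp (-2 * b * (a - x))) :=
  ⟨fun hb => (integral_invGaussPdf hax b).trans (if_neg hb.not_gt),
    fun hb => (integral_invGaussPdf hax b).trans (if_pos hb)⟩
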